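/- There exists a universal constant C > 0 such that for any two centered Gaussian distributions P = N(0, σ₁²) and Q = N(0, σ₂²) with σ₁, σ₂ > 0, the total variation distance satisfies ‖P - Q‖_TV ≤ C |σ₂²/σ₁² - 1|. -/

import Mathlib

/-!
Both Gaussians have densities `pᵢ = cᵢ exp (-x² / 2vᵢ)`, so their total variation distance is at
most `∫ |p₁ - p₂|`. Splitting `p₁ - p₂ = c₁ (e^{-x²/2v₁} - e^{-x²/2v₂}) + (c₁ - c₂) e^{-x²/2v₂}` and
using `|e^{-a} - e^{-b}| ≤ |a - b| (e^{-a} + e^{-b})`, the integral is controlled by Gaussian second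
moments: with `r = v₂ / v₁` it is at most `|√r - 1| + |r - 1| (1 / r + √r) / 2 ≤ 3 |r - 1|` as long
as `|r - 1| ≤ 1 / 2`. Otherwise the total variation distance is at most `1 < 2 |r - 1|`.
-/

open MeasureTheory ProbabilityTheory Real
open scoped NNReal

noncomputable def tvDist (P Q : Measure ℝ) : ℝ :=
  ⨆ s : Set ℝ, |(P s).toReal - (Q s).toReal|

lemma tvDist_le_one (P Q : Measure ℝ) [IsProbabilityMeasure P] [IsProbabilityMeasure Q] :
    tvDist P Q ≤ 1 :=
  Real.iSup_le (fun _ ↦ abs_sub_le_of_nonneg_of_le ENNReal.toReal_nonneg measureReal_le_one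
    ENNReal.toReal_nonneg measureReal_le_one) zero_le_one

lemma toReal_withDensity_ofReal_apply {α : Type*} [MeasurableSpace α] (μ : Measure α) [SFinite μ]
    {f : α → ℝ} (hf : Integrable f μ) (hf₀ : 0 ≤ᵐ[μ] f) (s : Set α) :
    (μ.withDensity (fun x ↦ ENNReal.ofReal (f x)) s).toReal = ∫ x in s, f x ∂μ := by
  rw [withDensity_apply' _ s, ← ofReal_integral_eq_lintegral_ofReal hf.restrict
    (ae_restrict_of_ae hf₀), ENNReal.toReal_ofReal (integral_nonneg_of_ae (ae_restrict_of_ae hf₀))]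

lemma tvDist_withDensity_le_integral_abs_sub (μ : Measure ℝ) [SFinite μ] {f g : ℝ → ℝ}
    (hf : Integrable f μ) (hg : Integrable g μ) (hf₀ : 0 ≤ᵐ[μ] f) (hg₀ : 0 ≤ᵐ[μ] g) :
    tvDist (μ.withDensity fun x ↦ ENNReal.ofReal (f x))
      (μ.withDensity fun x ↦ ENNReal.ofReal (g x)) ≤ ∫ x, |f x - g x| ∂μ := by
  refine Real.iSup_le (fun s ↦ ?_) (integral_nonneg fun _ ↦ abs_nonneg _)
  rw [toReal_withDensity_ofReal_apply μ hf hf₀, toReal_withDensity_ofReal_apply μ hg hg₀,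
    ← integral_sub hf.restrict hg.restrict]
  exact (abs_integral_le_integral_abs).trans
    (setIntegral_le_integral (hf.sub hg).abs (ae_of_all _ fun _ ↦ abs_nonneg _))

lemma tvDist_gaussianReal_le_integral_abs_sub (μ₁ μ₂ : ℝ) {v₁ v₂ : ℝ≥0} (hv₁ : v₁ ≠ 0)
    (hv₂ : v₂ ≠ 0) :
    tvDist (gaussianReal μ₁ v₁) (gaussianReal μ₂ v₂)
      ≤ ∫ x, |gaussianPDFReal μ₁ v₁ x - gaussianPDFReal μ₂ v₂ x| := by
  rw [gaussianReal_of_var_ne_zero _ hv₁, gaussianReal_of_var_ne_zero _ hv₂, gaussianPDF_def,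
    gaussianPDF_def]
  exact tvDist_withDensity_le_integral_abs_sub _ (integrable_gaussianPDFReal _ _)
    (integrable_gaussianPDFReal _ _) (ae_of_all _ (gaussianPDFReal_nonneg _ _))
    (ae_of_all _ (gaussianPDFReal_nonneg _ _))

lemma abs_exp_neg_sub_exp_neg_le (a b : ℝ) :
    |exp (-a) - exp (-b)| ≤ |a - b| * (exp (-a) + exp (-b)) := by
  wlog hba : b ≤ a generalizing a b
  · rw [abs_sub_comm, abs_sub_comm a, add_comm]
    exact this b a (le_of_not_ge hba)
  have h : exp (-b) - exp (-a) ≤ (a - b) * exp (-b) := by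
    have := one_sub_le_exp_neg (a - b)
    rw [show exp (-a) = exp (-b) * exp (-(a - b)) by rw [← exp_add]; ring_nf]
    nlinarith [exp_pos (-b)]
  rw [abs_of_nonpos (by simpa using hba), abs_of_nonneg (sub_nonneg.2 hba)]
  nlinarith [exp_pos (-a)]

lemma integral_sub_sq_mul_gaussianPDFReal (μ : ℝ) (v : ℝ≥0) :
    ∫ x, (x - μ) ^ 2 * gaussianPDFReal μ v x = v := by
  rcases eq_or_ne v 0 with rfl | hv
  · simp
  have h := variance_fun_id_gaussianReal (μ := μ) (v := v)
  rw [variance_eq_integral aemeasurable_id', integral_id_gaussianReal,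
    integral_gaussianReal_eq_integral_smul hv] at h
  simpa only [smul_eq_mul, mul_comm] using h

lemma integrable_sub_sq_mul_gaussianPDFReal (μ : ℝ) (v : ℝ≥0) :
    Integrable (fun x ↦ (x - μ) ^ 2 * gaussianPDFReal μ v x) := by
  rcases eq_or_ne v 0 with rfl | hv
  · simp
  have h : Integrable (fun x ↦ (x - μ) ^ 2) (gaussianReal μ v) :=
    ((memLp_id_gaussianReal 2).sub (memLp_const μ)).integrable_sq
  rw [gaussianReal_of_var_ne_zero _ hv, integrable_withDensity_iff_integrable_smul'
    (measurable_gaussianPDF μ v) (ae_of_all _ fun _ ↦ gaussianPDF_lt_top)] at h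
  simpa only [toReal_gaussianPDF, smul_eq_mul, mul_comm] using h

lemma abs_gaussianPDFReal_sub_le (μ x : ℝ) {v₁ v₂ : ℝ≥0} (hv₂ : v₂ ≠ 0) :
    |gaussianPDFReal μ v₁ x - gaussianPDFReal μ v₂ x| ≤
      |√(v₂ / v₁) - 1| * gaussianPDFReal μ v₂ x
        + |1 / (2 * (v₁ : ℝ)) - 1 / (2 * v₂)| * ((x - μ) ^ 2 * gaussianPDFReal μ v₁ x
          + √(v₂ / v₁) * ((x - μ) ^ 2 * gaussianPDFReal μ v₂ x)) := by
  simp only [gaussianPDFReal, neg_div]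
  set c₁ := (√(2 * π * v₁))⁻¹
  set c₂ := (√(2 * π * v₂))⁻¹
  set k := √(v₂ / v₁)
  set D := |1 / (2 * (v₁ : ℝ)) - 1 / (2 * v₂)|
  set E₁ := exp (-((x - μ) ^ 2 / (2 * v₁)))
  set E₂ := exp (-((x - μ) ^ 2 / (2 * v₂)))
  have hc : c₁ = k * c₂ := by
    have : √(v₂ : ℝ) ≠ 0 := by positivity
    simp only [c₁, c₂, k]
    rw [Real.sqrt_div' _ v₁.coe_nonneg, Real.sqrt_mul' _ v₁.coe_nonneg,
      Real.sqrt_mul' _ v₂.coe_nonneg]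
    field_simp
  have hE : |E₁ - E₂| ≤ D * ((x - μ) ^ 2 * (E₁ + E₂)) := by
    calc |E₁ - E₂| ≤ |(x - μ) ^ 2 / (2 * v₁) - (x - μ) ^ 2 / (2 * v₂)| * (E₁ + E₂) :=
          abs_exp_neg_sub_exp_neg_le _ _
      _ = D * ((x - μ) ^ 2 * (E₁ + E₂)) := by
          rw [← mul_one_div, ← mul_one_div ((x - μ) ^ 2), ← mul_sub, abs_mul,
            abs_of_nonneg (sq_nonneg _)]
          ring
  have hc₁ : 0 ≤ c₁ := by positivity
  calc |c₁ * E₁ - c₂ * E₂| = |c₁ * (E₁ - E₂) + (k - 1) * (c₂ * E₂)| := by rw [hc]; ring_nf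
    _ ≤ c₁ * |E₁ - E₂| + |k - 1| * (c₂ * E₂) := by
        refine (abs_add_le _ _).trans_eq ?_
        rw [abs_mul, abs_mul, abs_of_nonneg hc₁, abs_of_nonneg (by positivity : 0 ≤ c₂ * E₂)]
    _ ≤ c₁ * (D * ((x - μ) ^ 2 * (E₁ + E₂))) + |k - 1| * (c₂ * E₂) := by gcongr
    _ = _ := by rw [hc]; ring

lemma integral_abs_gaussianPDFReal_sub_le (μ : ℝ) {v₁ v₂ : ℝ≥0} (hv₂ : v₂ ≠ 0) :
    ∫ x, |gaussianPDFReal μ v₁ x - gaussianPDFReal μ v₂ x|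
      ≤ |√(v₂ / v₁) - 1| + |1 / (2 * (v₁ : ℝ)) - 1 / (2 * v₂)| * (v₁ + √(v₂ / v₁) * v₂) := by
  set k := √(v₂ / v₁)
  set D := |1 / (2 * (v₁ : ℝ)) - 1 / (2 * v₂)|
  have hp := integrable_gaussianPDFReal μ v₂
  have hm₁ := integrable_sub_sq_mul_gaussianPDFReal μ v₁
  have hm₂ : Integrable fun x ↦ k * ((x - μ) ^ 2 * gaussianPDFReal μ v₂ x) :=
    (integrable_sub_sq_mul_gaussianPDFReal μ v₂).const_mul k
  have hm : Integrable fun x ↦ D * ((x - μ) ^ 2 * gaussianPDFReal μ v₁ x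
      + k * ((x - μ) ^ 2 * gaussianPDFReal μ v₂ x)) := (hm₁.add hm₂).const_mul D
  calc ∫ x, |gaussianPDFReal μ v₁ x - gaussianPDFReal μ v₂ x|
      ≤ ∫ x, (|k - 1| * gaussianPDFReal μ v₂ x + D * ((x - μ) ^ 2 * gaussianPDFReal μ v₁ x
          + k * ((x - μ) ^ 2 * gaussianPDFReal μ v₂ x))) :=
        integral_mono ((integrable_gaussianPDFReal μ v₁).sub hp).abs ((hp.const_mul _).add hm)
          (abs_gaussianPDFReal_sub_le μ · hv₂)
    _ = |k - 1| + D * (v₁ + k * v₂) := by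
        rw [integral_add (hp.const_mul _) hm, integral_const_mul, integral_const_mul,
          integral_add hm₁ hm₂, integral_const_mul, integral_gaussianPDFReal_eq_one μ hv₂,
          integral_sub_sq_mul_gaussianPDFReal, integral_sub_sq_mul_gaussianPDFReal, mul_one]

lemma abs_sqrt_div_sub_one_add_le_three_mul {a b : ℝ} (ha : 0 < a) (hb : 0 < b)
    (h : |b / a - 1| ≤ 1 / 2) :
    |√(b / a) - 1| + |1 / (2 * a) - 1 / (2 * b)| * (a + √(b / a) * b) ≤ 3 * |b / a - 1| := by
  set r := b / a with hr
  have hr₀ : 0 < r := by positivity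
  obtain ⟨hr_lo, hr_hi⟩ : 1 / 2 ≤ r ∧ r ≤ 3 / 2 := by
    constructor <;> linarith [abs_le.1 h]
  have hs := sq_sqrt hr₀.le
  have hs₀ := sqrt_nonneg r
  have h_sqrt : |√r - 1| ≤ |r - 1| := by
    have : |r - 1| = |√r - 1| * (√r + 1) := by
      rw [← abs_of_pos (by positivity : 0 < √r + 1), ← abs_mul]
      congr 1
      linear_combination -hs
    rw [this]
    exact le_mul_of_one_le_right (abs_nonneg _) (by linarith)
  have h_var : |1 / (2 * a) - 1 / (2 * b)| * (a + √r * b) = |r - 1| * ((r⁻¹ + √r) / 2) := by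
    have hb' : b = r * a := by rw [hr]; field_simp
    rw [hb', show 1 / (2 * a) - 1 / (2 * (r * a)) = (r - 1) * (1 / (2 * r * a)) by field_simp,
      abs_mul, abs_of_pos (by positivity : 0 < 1 / (2 * r * a))]
    field_simp
  have h_coef : (r⁻¹ + √r) / 2 ≤ 2 := by
    have : r⁻¹ ≤ 2 := by rw [inv_le_comm₀ hr₀ two_pos]; linarith
    nlinarith
  rw [h_var]
  nlinarith [abs_nonneg (r - 1)]

/-- There is a universal constant `C > 0` such that for any two centered Gaussians,
`‖N(0,σ₁²) - N(0,σ₂²)‖_TV ≤ C |σ₂²/σ₁² - 1|`. -/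
theorem tvDist_centered_gaussians_le :
    ∃ C > (0 : ℝ), ∀ σ₁ σ₂ : ℝ, 0 < σ₁ → 0 < σ₂ →
      tvDist (gaussianReal 0 ⟨σ₁ ^ 2, sq_nonneg σ₁⟩) (gaussianReal 0 ⟨σ₂ ^ 2, sq_nonneg σ₂⟩)
        ≤ C * |σ₂ ^ 2 / σ₁ ^ 2 - 1| := by
  refine ⟨3, by norm_num, fun σ₁ σ₂ h₁ h₂ ↦ ?_⟩
  have hv : ∀ σ : ℝ, 0 < σ → (⟨σ ^ 2, sq_nonneg σ⟩ : ℝ≥0) ≠ 0 :=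
    fun σ hσ h ↦ (pow_pos hσ 2).ne' (congrArg NNReal.toReal h)
  rcases le_or_gt |σ₂ ^ 2 / σ₁ ^ 2 - 1| (1 / 2) with h_close | h_far
  · calc _ ≤ _ := tvDist_gaussianReal_le_integral_abs_sub 0 0 (hv σ₁ h₁) (hv σ₂ h₂)
      _ ≤ _ := integral_abs_gaussianPDFReal_sub_le 0 (hv σ₂ h₂)
      _ ≤ _ := abs_sqrt_div_sub_one_add_le_three_mul (pow_pos h₁ 2) (pow_pos h₂ 2) h_close
  · -- instance search does not see through the anonymous constructors `⟨σ ^ 2, _⟩ : ℝ≥0`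
    exact (@tvDist_le_one _ _ (instIsProbabilityMeasureGaussianReal _ _)
      (instIsProbabilityMeasureGaussianReal _ _)).trans (by linarith)
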